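/- Let (X, d) be a complete metric space and T : X → X a mapping such that for some nonnegative reals α, β, γ, δ with α + β + γ + 2δ < 1, d(Tx, Ty) ≤ α·d(x,y) + β·d(x,Tx) + γ·d(y,Ty) + δ·(d(x,Ty) + d(y,Tx)) for all x, y ∈ X. Then T has a unique fixed point in X. -/

import Mathlib

/-!
Ćirić's condition applied to `x` and `T x`, together with `d(x, T²x) ≤ d(x, Tx) + d(Tx, T²x)`,
gives `d(Tx, T²x) ≤ k d(x, Tx)` with `k = (α + β + δ) / (1 - γ - δ) < 1`, so every orbit is
Cauchy. Although `T` need not be continuous, the condition applied to the limit `x` and the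
orbit points bounds `d(Tx, x)` by `(β + δ) d(x, Tx)`, which forces `Tx = x`; applied to two
fixed points it bounds their distance by `(α + 2δ)` times itself.
-/

open Filter Function Topology

section

variable {X : Type*} [MetricSpace X]

theorem eq_of_dist_le_mul_dist {x y : X} {c : ℝ} (hc : c < 1) (h : dist x y ≤ c * dist x y) :
    x = y :=
  dist_le_zero.mp <| by nlinarith [dist_nonneg (x := x) (y := y)]

theorem dist_iterate_succ_le_geometric_of_dist_apply_apply_le {T : X → X} {k : ℝ} (hk : 0 ≤ k)
    (hT : ∀ x, dist (T x) (T (T x)) ≤ k * dist x (T x)) (x : X) (n : ℕ) :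
    dist (T^[n] x) (T^[n + 1] x) ≤ dist x (T x) * k ^ n := by
  induction n with
  | zero => simp
  | succ n ih =>
    calc dist (T^[n + 1] x) (T^[n + 2] x)
        = dist (T (T^[n] x)) (T (T (T^[n] x))) := by
          simp only [iterate_succ_apply']
      _ ≤ k * dist (T^[n] x) (T (T^[n] x)) := hT _
      _ = k * dist (T^[n] x) (T^[n + 1] x) := by rw [iterate_succ_apply']
      _ ≤ k * (dist x (T x) * k ^ n) := by gcongr
      _ = dist x (T x) * k ^ (n + 1) := by ring

theorem cauchySeq_iterate_of_dist_apply_apply_le {T : X → X} {k : ℝ} (hk₀ : 0 ≤ k) (hk₁ : k < 1)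
    (hT : ∀ x, dist (T x) (T (T x)) ≤ k * dist x (T x)) (x : X) :
    CauchySeq fun n ↦ T^[n] x :=
  cauchySeq_of_le_geometric k _ hk₁
    (dist_iterate_succ_le_geometric_of_dist_apply_apply_le hk₀ hT x)

def IsCiricContraction (T : X → X) (α β γ δ : ℝ) : Prop :=
  ∀ x y : X, dist (T x) (T y) ≤
    α * dist x y + β * dist x (T x) + γ * dist y (T y) + δ * (dist x (T y) + dist y (T x))

namespace IsCiricContraction

variable {T : X → X} {α β γ δ : ℝ}

theorem dist_apply_apply_le (hT : IsCiricContraction T α β γ δ) (hδ : 0 ≤ δ)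
    (hγδ : γ + δ < 1) (x : X) :
    dist (T x) (T (T x)) ≤ (α + β + δ) / (1 - γ - δ) * dist x (T x) := by
  have hxy := hT x (T x)
  have htri : dist x (T (T x)) ≤ dist x (T x) + dist (T x) (T (T x)) := dist_triangle _ _ _
  rw [dist_self, add_zero] at hxy
  rw [div_mul_eq_mul_div, le_div_iff₀ (by linarith)]
  nlinarith

theorem isFixedPt_of_tendsto_iterate (hT : IsCiricContraction T α β γ δ) (hβδ : β + δ < 1)
    {x₀ x : X} (hx : Tendsto (fun n ↦ T^[n] x₀) atTop (𝓝 x)) : IsFixedPt T x := by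
  have hx' : Tendsto (fun n ↦ T (T^[n] x₀)) atTop (𝓝 x) :=
    (hx.comp (tendsto_add_atTop_nat 1)).congr fun n ↦ iterate_succ_apply' T n x₀
  have hclosed : IsClosed {p : X × X | dist (T x) p.2 ≤ α * dist x p.1 + β * dist x (T x) +
      γ * dist p.1 p.2 + δ * (dist x p.2 + dist p.1 (T x))} :=
    isClosed_le (by fun_prop) (by fun_prop)
  have hlim := hclosed.mem_of_tendsto (hx.prodMk_nhds hx') (Eventually.of_forall fun n ↦ hT x _)
  simp only [Set.mem_ofPred_eq, dist_self, mul_zero, zero_add, add_zero] at hlim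
  rw [dist_comm x (T x)] at hlim
  exact eq_of_dist_le_mul_dist hβδ (by linarith)

theorem eq_of_isFixedPt (hT : IsCiricContraction T α β γ δ) (hαδ : α + 2 * δ < 1) {x y : X}
    (hx : IsFixedPt T x) (hy : IsFixedPt T y) : x = y := by
  refine eq_of_dist_le_mul_dist hαδ ?_
  have hxy := hT x y
  rw [hx.eq, hy.eq, dist_self, dist_self, dist_comm y x] at hxy
  linarith

end IsCiricContraction

end

theorem ciric_generalized_contraction_fixed_point {X : Type*} [MetricSpace X] [CompleteSpace X]
    [Nonempty X] (T : X → X) (α β γ δ : ℝ)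
    (hα : 0 ≤ α) (hβ : 0 ≤ β) (hγ : 0 ≤ γ) (hδ : 0 ≤ δ)
    (hsum : α + β + γ + 2 * δ < 1)
    (hT : ∀ x y : X, dist (T x) (T y) ≤
      α * dist x y + β * dist x (T x) + γ * dist y (T y) + δ * (dist x (T y) + dist y (T x))) :
    ∃! x : X, T x = x := by
  have hT : IsCiricContraction T α β γ δ := hT
  have hk₀ : 0 ≤ (α + β + δ) / (1 - γ - δ) := div_nonneg (by linarith) (by linarith)
  have hk₁ : (α + β + δ) / (1 - γ - δ) < 1 := by rw [div_lt_one (by linarith)]; linarith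
  obtain ⟨x₀⟩ := ‹Nonempty X›
  obtain ⟨x, hx⟩ := cauchySeq_tendsto_of_complete <|
    cauchySeq_iterate_of_dist_apply_apply_le hk₀ hk₁ (hT.dist_apply_apply_le hδ (by linarith)) x₀
  have hfix : IsFixedPt T x := hT.isFixedPt_of_tendsto_iterate (by linarith) hx
  exact ⟨x, hfix, fun y hy ↦ hT.eq_of_isFixedPt (by linarith) hy hfix⟩
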